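/- Let $n\ge 2$ be an integer and let $c_u$ for $0\le u\le n^2-1$ denote the aperiodic autocorrelations of the coefficient sequence of $h_n$. Then for every integer $v$ with $0 < v < n/2$, $\sum_{u=0}^{n-1} |c_{nu+v}|^2 = 2n\sum_{k=1}^{v}\left(\frac{\sin(\pi k/n)}{\sin(\pi v/n)}\right)^2 - n$. -/

import Mathlib

/-- The coefficients of `h_n`: `b_{nj+k} = ζ^{jk}` with `ζ = e^{2πi/n}`, for `0 ≤ j,k < n`;
here `j = m / n` and `k = m % n` for an index `m = nj + k`. -/
noncomputable def hCoef (n : ℕ) (m : ℕ) : ℂ :=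
  Complex.exp (2 * Real.pi * Complex.I / n) ^ ((m / n) * (m % n))

/-- The aperiodic autocorrelations `c_u = ∑_{0 ≤ m, m+u < n²} b_m conj(b_{m+u})` of the
coefficient sequence of `h_n`. -/
noncomputable def hCorr (n : ℕ) (u : ℕ) : ℂ :=
  ∑ m ∈ Finset.range (n ^ 2 - u), hCoef n m * (starRingEnd ℂ) (hCoef n (m + u))

/-!
Moving an index down one row, `m ↦ m + n`, multiplies `b_m` by `ζ^(m % n)`, hence every product
`b_m conj(b_(m+D))` by `conj(ζ^D)`. So `(1 - conj ζ^D) c_D` telescopes to the difference of two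
windows of `n` consecutive coefficients, and a window starting in column `r` of row `q` is
`∑_k ζ^((q + [k < r]) k)`. For `D = nu + v` this exhibits `(1 - conj ζ^v) c_(nu+v)` as the
conjugate of the discrete Fourier transform, at `u`, of `ε_k (ζ^k - 1)` with `ε = 1` on `[0, v)`
and `ε = -1` on `[n - v, n)`. Parseval gives
`|ζ^v - 1|² ∑_u |c_(nu+v)|² = n ∑_k ε_k² |ζ^k - 1|²`, and `|ζ^k - 1| = 2 |sin (πk/n)|`.
-/

open Finset ComplexConjugate

theorem Finset.sum_range_sub_add {M : Type*} [AddCommGroup M] (f : ℕ → M) (L n : ℕ) :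
    ∑ m ∈ range L, (f m - f (m + n)) = ∑ m ∈ range n, (f m - f (m + L)) := by
  have h := (sum_range_add f L n).symm.trans (add_comm L n ▸ sum_range_add f n L)
  simp only [sum_sub_distrib, add_comm _ n, add_comm _ L]
  rw [sub_eq_sub_iff_add_eq_add, h]

namespace IsPrimitiveRoot
variable {ζ : ℂ} {n : ℕ}

theorem conj_pow_eq_pow (hζ : IsPrimitiveRoot ζ n) {a b : ℕ} (hab : a + b = n) :
    conj (ζ ^ b) = ζ ^ a := by
  rcases Nat.eq_zero_or_pos n with rfl | hn
  · obtain ⟨rfl, rfl⟩ : a = 0 ∧ b = 0 := by omega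
    simp
  have hb : ‖ζ ^ b‖ = 1 := by rw [norm_pow, hζ.norm'_eq_one hn.ne', one_pow]
  rw [← Complex.inv_eq_conj hb, eq_comm,
    ← mul_eq_one_iff_eq_inv₀ (pow_ne_zero _ (hζ.ne_zero hn.ne')), ← pow_add, hab,
    hζ.pow_eq_one]

theorem sum_pow_mul_conj_pow {k l : ℕ} (hζ : IsPrimitiveRoot ζ n) (hk : k < n) (hl : l < n) :
    ∑ u ∈ range n, ζ ^ (u * k) * conj (ζ ^ (u * l)) = if k = l then (n : ℂ) else 0 := by
  have hl' : conj (ζ ^ l) = ζ ^ (n - l) := hζ.conj_pow_eq_pow (by omega)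
  have hterm (u : ℕ) : ζ ^ (u * k) * conj (ζ ^ (u * l)) = (ζ ^ k * ζ ^ (n - l)) ^ u := by
    rw [mul_comm u, mul_comm u, pow_mul, pow_mul, map_pow, hl', mul_pow]
  simp only [hterm]
  split_ifs with hkl
  · rw [hkl, ← pow_add, Nat.add_sub_cancel' hl.le, hζ.pow_eq_one]
    simp
  · have hne : ζ ^ k * ζ ^ (n - l) ≠ 1 := fun h => hkl <| hζ.pow_inj hk hl <|
      mul_right_cancel₀ (pow_ne_zero _ (hζ.ne_zero (by omega))) <| by
        rw [h, ← pow_add, Nat.add_sub_cancel' hl.le, hζ.pow_eq_one]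
    rw [geom_sum_eq hne, mul_pow, ← pow_mul, ← pow_mul, mul_comm k, mul_comm (n - l), pow_mul,
      pow_mul, hζ.pow_eq_one, one_pow, one_pow, one_mul, sub_self, zero_div]

theorem sum_norm_sq_sum_mul_pow (hζ : IsPrimitiveRoot ζ n) (g : ℕ → ℂ) :
    ∑ u ∈ range n, ‖∑ k ∈ range n, g k * ζ ^ (u * k)‖ ^ 2 =
      n * ∑ k ∈ range n, ‖g k‖ ^ 2 := by
  apply Complex.ofReal_injective
  push_cast
  simp_rw [← Complex.mul_conj', map_sum, map_mul, sum_mul_sum, mul_sum]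
  rw [sum_comm]
  refine sum_congr rfl fun k hk => ?_
  rw [sum_comm]
  simp_rw [mul_mul_mul_comm _ (ζ ^ _), ← mul_sum]
  rw [sum_eq_single k]
  · rw [hζ.sum_pow_mul_conj_pow (mem_range.1 hk) (mem_range.1 hk), if_pos rfl]; ring
  · intro l hl hlk
    rw [hζ.sum_pow_mul_conj_pow (mem_range.1 hk) (mem_range.1 hl), if_neg (Ne.symm hlk), mul_zero]
  · exact fun h => absurd hk h

end IsPrimitiveRoot

noncomputable def zeta (n : ℕ) : ℂ := Complex.exp (2 * Real.pi * Complex.I / n)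

section
variable {n : ℕ}

theorem isPrimitiveRoot_zeta (hn : n ≠ 0) : IsPrimitiveRoot (zeta n) n :=
  Complex.isPrimitiveRoot_exp n hn

theorem norm_zeta_pow_sub_one_sq (k : ℕ) :
    ‖zeta n ^ k - 1‖ ^ 2 = 4 * Real.sin (Real.pi * k / n) ^ 2 := by
  have h : zeta n ^ k = Complex.exp (Complex.I * ↑(2 * Real.pi * k / n)) := by
    rw [zeta, ← Complex.exp_nat_mul]; push_cast; ring_nf
  rw [h, Complex.norm_exp_I_mul_ofReal_sub_one, Real.norm_eq_abs, sq_abs]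
  ring_nf

theorem hCoef_mul_add (j : ℕ) {k : ℕ} (hk : k < n) :
    hCoef n (n * j + k) = zeta n ^ (j * k) := by
  rw [hCoef, Nat.mul_add_div (by omega), Nat.mul_add_mod, Nat.div_eq_of_lt hk,
    Nat.mod_eq_of_lt hk, add_zero, zeta]

theorem hCoef_add_self (hn : n ≠ 0) (m : ℕ) :
    hCoef n (m + n) = hCoef n m * zeta n ^ (m % n) := by
  rw [hCoef, hCoef, Nat.add_div_right _ (Nat.pos_of_ne_zero hn), Nat.add_mod_right, add_one_mul,
    pow_add, zeta]

theorem hCoef_mul_conj_add_self (hn : n ≠ 0) (m D : ℕ) :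
    hCoef n (m + n) * conj (hCoef n (m + n + D)) =
      conj (zeta n ^ D) * (hCoef n m * conj (hCoef n (m + D))) := by
  have hζ := isPrimitiveRoot_zeta hn
  have hmod (x : ℕ) : zeta n ^ (x % n) = zeta n ^ x := by
    rw [← pow_mod_orderOf (zeta n) x, ← hζ.eq_orderOf]
  have hunit : zeta n ^ m * conj (zeta n ^ m) = 1 := by
    rw [Complex.mul_conj', norm_pow, hζ.norm'_eq_one hn]; simp
  rw [add_right_comm, hCoef_add_self hn, hCoef_add_self hn, map_mul, hmod, hmod, pow_add, map_mul]
  linear_combination (hCoef n m * conj (hCoef n (m + D)) * conj (zeta n ^ D)) * hunit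

theorem sum_range_hCoef_mul_add_add (q : ℕ) {r : ℕ} (hr : r ≤ n) :
    ∑ i ∈ range n, hCoef n (n * q + r + i) =
      ∑ k ∈ range n, zeta n ^ ((q + if k < r then 1 else 0) * k) := by
  have hL := sum_range_add (fun i => hCoef n (n * q + r + i)) (n - r) r
  have hR := sum_range_add (fun k => zeta n ^ ((q + if k < r then 1 else 0) * k)) r (n - r)
  rw [Nat.sub_add_cancel hr] at hL
  rw [Nat.add_sub_cancel' hr] at hR
  rw [hL, hR, add_comm]
  congr 1
  · refine sum_congr rfl fun i hi => ?_
    have hi := mem_range.1 hi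
    rw [if_pos hi, show n * q + r + (n - r + i) = n * (q + 1) + i by rw [mul_add_one]; omega,
      hCoef_mul_add _ (by omega)]
  · refine sum_congr rfl fun i hi => ?_
    have hi := mem_range.1 hi
    rw [if_neg (by omega), add_zero, add_assoc, hCoef_mul_add _ (by omega)]

theorem one_sub_conj_mul_hCorr {D : ℕ} (hD : D ≤ n ^ 2) :
    (1 - conj (zeta n ^ D)) * hCorr n D =
      conj (∑ i ∈ range n, hCoef n (D + i)) - ∑ i ∈ range n, hCoef n (n ^ 2 - D + i) := by
  rcases eq_or_ne n 0 with rfl | hn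
  · simp [hCorr]
  set a : ℕ → ℂ := fun m => hCoef n m * conj (hCoef n (m + D))
  have hfirst : ∀ m < n, a m = conj (hCoef n (D + m)) := fun m hm => by
    simp [a, hCoef, Nat.div_eq_of_lt hm, add_comm]
  have hlast : ∀ m < n, a (m + (n ^ 2 - D)) = hCoef n (n ^ 2 - D + m) := fun m hm => by
    have h : m + (n ^ 2 - D) + D = n * n + m := by rw [← sq]; omega
    simp only [a]
    rw [h, hCoef_mul_add _ hm, pow_mul, (isPrimitiveRoot_zeta hn).pow_eq_one]
    simp [add_comm]
  calc (1 - conj (zeta n ^ D)) * hCorr n D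
      = ∑ m ∈ range (n ^ 2 - D), (a m - a (m + n)) := by
        simp only [hCorr, mul_sum, a, hCoef_mul_conj_add_self hn]
        exact sum_congr rfl fun m _ => by ring
    _ = ∑ m ∈ range n, (a m - a (m + (n ^ 2 - D))) := sum_range_sub_add a _ n
    _ = _ := by
        rw [sum_sub_distrib, map_sum, sum_congr rfl fun m hm => hfirst m (mem_range.1 hm),
          sum_congr rfl fun m hm => hlast m (mem_range.1 hm)]

noncomputable def hCorrSpectrum (n v k : ℕ) : ℂ :=
  ((if k < v then 1 else 0) - (if n - v ≤ k then 1 else 0)) * (zeta n ^ k - 1)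

theorem one_sub_conj_mul_hCorr_mul_add {u v : ℕ} (hu : u < n) (hv : v ≤ n) :
    (1 - conj (zeta n ^ v)) * hCorr n (n * u + v) =
      conj (∑ k ∈ range n, hCorrSpectrum n v k * zeta n ^ (u * k)) := by
  have hζ := isPrimitiveRoot_zeta (n := n) (by omega)
  have hD : n * u + v ≤ n ^ 2 := by nlinarith
  have hcompl : n ^ 2 - (n * u + v) = n * (n - u - 1) + (n - v) := by
    zify [hD, hv, hu, Nat.sub_le n u]
    push_cast [Nat.sub_sub, Nat.cast_sub (show u + 1 ≤ n by omega)]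
    ring
  have hreflect : ∀ k, zeta n ^ ((n - u - 1 + if k < n - v then 1 else 0) * k) =
      conj (zeta n ^ ((u + if n - v ≤ k then 1 else 0) * k)) := fun k => by
    rw [pow_mul, pow_mul, map_pow, hζ.conj_pow_eq_pow]
    split_ifs <;> omega
  have hterm : ∀ k, zeta n ^ ((u + if k < v then 1 else 0) * k) -
      zeta n ^ ((u + if n - v ≤ k then 1 else 0) * k) = hCorrSpectrum n v k * zeta n ^ (u * k) :=
    fun k => by simp only [hCorrSpectrum]; split_ifs <;> ring
  have hperiod : zeta n ^ (n * u + v) = zeta n ^ v := by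
    rw [pow_add, pow_mul, hζ.pow_eq_one, one_pow, one_mul]
  rw [← hperiod, one_sub_conj_mul_hCorr hD, hcompl,
    sum_range_hCoef_mul_add_add u hv, sum_range_hCoef_mul_add_add _ (Nat.sub_le n v),
    sum_congr rfl fun k _ => hreflect k, ← map_sum, ← map_sub, ← sum_sub_distrib,
    sum_congr rfl fun k _ => hterm k]

theorem norm_zeta_pow_sub_sub_one {k : ℕ} (hk : k ≤ n) :
    ‖zeta n ^ (n - k) - 1‖ = ‖zeta n ^ k - 1‖ := by
  rcases eq_or_ne n 0 with rfl | hn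
  · obtain rfl : k = 0 := by omega
    rfl
  rw [← (isPrimitiveRoot_zeta hn).conj_pow_eq_pow (Nat.sub_add_cancel hk), ← Complex.norm_conj]
  simp

theorem sum_norm_sq_hCorrSpectrum {v : ℕ} (h2v : 2 * v ≤ n) :
    ∑ k ∈ range n, ‖hCorrSpectrum n v k‖ ^ 2 =
      2 * ∑ k ∈ Icc 1 v, ‖zeta n ^ k - 1‖ ^ 2 - ‖zeta n ^ v - 1‖ ^ 2 := by
  set s : ℕ → ℝ := fun k => ‖zeta n ^ k - 1‖ ^ 2
  have hterm : ∀ k, ‖hCorrSpectrum n v k‖ ^ 2 =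
      (if k < v then s k else 0) + (if n - v ≤ k then s k else 0) := fun k => by
    simp only [hCorrSpectrum, s]
    split_ifs <;> first | omega | simp [norm_sub_rev]
  have hlow : (range n).filter (· < v) = range v := by
    ext; simp only [mem_filter, mem_range]; omega
  have hhigh : (range n).filter (n - v ≤ ·) = Ico (n - v) n := by
    ext; simp only [mem_filter, mem_range, mem_Ico]; omega
  have hreflect : ∑ k ∈ Ico (n - v) n, s k = ∑ k ∈ Icc 1 v, s k :=
    sum_nbij' (n - ·) (n - ·)
      (fun k hk => by simp only [mem_Ico, mem_Icc] at hk ⊢; omega)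
      (fun k hk => by simp only [mem_Ico, mem_Icc] at hk ⊢; omega)
      (fun k hk => by simp only [mem_Ico] at hk; omega)
      (fun k hk => by simp only [mem_Icc] at hk; omega)
      (fun k hk => by simp only [s, norm_zeta_pow_sub_sub_one (mem_Ico.1 hk).2.le])
  have hshift : ∑ k ∈ range v, s k + s v = s 0 + ∑ k ∈ Icc 1 v, s k := by
    rw [← sum_range_succ, sum_range_eq_add_Ico _ (Nat.succ_pos v), Nat.succ_eq_add_one,
      Ico_add_one_right_eq_Icc]
  simp only [sum_congr rfl fun k _ => hterm k, sum_add_distrib, ← sum_filter, hlow, hhigh,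
    hreflect]
  have hs0 : s 0 = 0 := by simp [s]
  linarith

end

theorem hCorr_sum_sq_general (n : ℕ) (v : ℕ) (hv1 : 0 < v) (hv2 : (v : ℝ) < (n : ℝ) / 2) :
    ∑ u ∈ Finset.range n, ‖hCorr n (n * u + v)‖ ^ 2 =
      2 * n * (∑ k ∈ Finset.Icc 1 v,
          (Real.sin (Real.pi * (k : ℝ) / n) / Real.sin (Real.pi * (v : ℝ) / n)) ^ 2) - n := by
  have h2v : 2 * v < n := by exact_mod_cast (by linarith : (2 * v : ℝ) < n)
  have hζ := isPrimitiveRoot_zeta (n := n) (by omega)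
  have hv : ‖zeta n ^ v - 1‖ ^ 2 ≠ 0 := by
    simpa [sub_eq_zero] using hζ.pow_ne_one_of_pos_of_lt hv1.ne' (by omega)
  have hd : ‖1 - conj (zeta n ^ v)‖ = ‖zeta n ^ v - 1‖ := by
    rw [← Complex.norm_conj]; simp [norm_sub_rev]
  have key : ‖zeta n ^ v - 1‖ ^ 2 * ∑ u ∈ range n, ‖hCorr n (n * u + v)‖ ^ 2 =
      n * (2 * ∑ k ∈ Icc 1 v, ‖zeta n ^ k - 1‖ ^ 2 - ‖zeta n ^ v - 1‖ ^ 2) := by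
    rw [← sum_norm_sq_hCorrSpectrum h2v.le, ← hζ.sum_norm_sq_sum_mul_pow, mul_sum]
    refine sum_congr rfl fun u hu => ?_
    rw [← hd, ← mul_pow, ← norm_mul,
      one_sub_conj_mul_hCorr_mul_add (mem_range.1 hu) (by omega), Complex.norm_conj]
  simp only [norm_zeta_pow_sub_one_sq, div_pow, ← mul_sum, ← sum_div] at key hv ⊢
  have hsin : Real.sin (Real.pi * v / n) ≠ 0 := fun h => hv (by simp [h])
  field_simp
  linear_combination key / 4

/-- For `0 < v < n/2`,
`∑_{u=0}^{n-1} |c_{nu+v}|² = 2n ∑_{k=1}^{v} (sin(πk/n)/sin(πv/n))² - n`. -/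
theorem hCorr_sum_sq (n : ℕ) (hn : 2 ≤ n) (v : ℕ) (hv1 : 0 < v) (hv2 : (v : ℝ) < (n : ℝ) / 2) :
    ∑ u ∈ Finset.range n, ‖hCorr n (n * u + v)‖ ^ 2 =
      2 * n * (∑ k ∈ Finset.Icc 1 v,
          (Real.sin (Real.pi * (k : ℝ) / n) / Real.sin (Real.pi * (v : ℝ) / n)) ^ 2) - n :=
  hCorr_sum_sq_general n v hv1 hv2
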